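/- The first-order Seiberg–Witten map for noncommutative U(1) Yang–Mills maps gauge orbits to gauge orbits: for all smooth functions λ, A₁, …, A_d: ℝᵈ → ℝ, every real antisymmetric d×d matrix θ, and each index i, one has the exact identity (d/ds)|_{s=0} Â_i( A + s∇λ ) = ∂_i λ̂(λ, A) − Σ_{k,l} θ^{kl} ∂_kλ ∂_lA_i, where the right-hand side is the noncommutative gauge transformation δ̂_{λ̂}Â_i = ∂_iλ̂ + i(λ̂ ⋆ Â_i − Â_i ⋆ λ̂) evaluated to first order in θ. -/

import Mathlib

/- STATEMENT 10: the first-order Seiberg–Witten map for noncommutative U(1)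
Yang–Mills maps gauge orbits to gauge orbits:
(d/ds)|₀ Â_i(A + s∇λ) = ∂_i λ̂(λ,A) − Σ_{k,l} θ^{kl} ∂_kλ ∂_lA_i. -/

noncomputable section

/-- Smooth real-valued functions on ℝᵈ. -/
abbrev SFd (d : ℕ) := (Fin d → ℝ) → ℝ

/-- Partial derivative ∂_k f at x. -/
def pdd {d : ℕ} (f : SFd d) (k : Fin d) (x : Fin d → ℝ) : ℝ :=
  fderiv ℝ f x (Pi.single k 1)

/-- First-order Seiberg–Witten field redefinition
  Â_i(A) = A_i − ½ Σ_{k,l} θ^{kl} A_k (2∂_lA_i − ∂_iA_l). -/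
def Ahat {d : ℕ} (θ : Fin d → Fin d → ℝ) (A : Fin d → SFd d) (i : Fin d)
    (x : Fin d → ℝ) : ℝ :=
  A i x - (1 / 2) * ∑ k, ∑ l, θ k l * A k x * (2 * pdd (A i) l x - pdd (A l) i x)

/-- First-order Seiberg–Witten gauge parameter
  λ̂(λ,A) = λ + ½ Σ_{k,l} θ^{kl} ∂_kλ A_l. -/
def lamhat {d : ℕ} (θ : Fin d → Fin d → ℝ) (lam : SFd d) (A : Fin d → SFd d)
    (x : Fin d → ℝ) : ℝ :=
  lam x + (1 / 2) * ∑ k, ∑ l, θ k l * pdd lam k x * A l x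

/-
`s ↦ Â_i(A + s∇λ)` is a quadratic polynomial in `s`, so its derivative at `0` is the
linearization of `Â` at `A` in the direction `∇λ`; `∂_i λ̂` is expanded by the Leibniz rule.
After `∂_l∂_iλ = ∂_i∂_lλ`, the two sides differ by `θ^{kl}` contracted with the symmetric
tensor `A_k ∂_i∂_lλ + A_l ∂_i∂_kλ`, which vanishes because `θ` is antisymmetric.
-/

open Finset

theorem sum_sum_antisymm_mul_symm_eq_zero {ι R : Type*} [Fintype ι] [Ring R]
    [IsAddTorsionFree R] {θ S : ι → ι → R} (hθ : ∀ k l, θ k l = -θ l k)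
    (hS : ∀ k l, S k l = S l k) : ∑ k, ∑ l, θ k l * S k l = 0 := by
  refine self_eq_neg.mp ?_
  calc ∑ k, ∑ l, θ k l * S k l = ∑ k, ∑ l, θ l k * S l k := sum_comm
    _ = -∑ k, ∑ l, θ k l * S k l := by
      simp only [← sum_neg_distrib, ← neg_mul, ← hθ, hS]

section PartialDerivatives

variable {d : ℕ} {f g : SFd d} {x : Fin d → ℝ}

lemma pdd_add (hf : DifferentiableAt ℝ f x) (hg : DifferentiableAt ℝ g x) (k : Fin d) :
    pdd (fun y => f y + g y) k x = pdd f k x + pdd g k x := by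
  simp [pdd, fderiv_fun_add hf hg]

lemma pdd_const_mul (hf : DifferentiableAt ℝ f x) (c : ℝ) (k : Fin d) :
    pdd (fun y => c * f y) k x = c * pdd f k x := by
  simp [pdd, fderiv_const_mul hf c]

lemma pdd_add_mul (hf : DifferentiableAt ℝ f x) (hg : DifferentiableAt ℝ g x) (c : ℝ)
    (k : Fin d) : pdd (fun y => f y + c * g y) k x = pdd f k x + c * pdd g k x := by
  rw [pdd_add hf (hg.const_mul c), pdd_const_mul hg]

lemma pdd_mul (hf : DifferentiableAt ℝ f x) (hg : DifferentiableAt ℝ g x) (k : Fin d) :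
    pdd (fun y => f y * g y) k x = pdd f k x * g x + f x * pdd g k x := by
  simp only [pdd, fderiv_fun_mul hf hg, add_apply, smul_apply, smul_eq_mul]
  ring

lemma pdd_sum {ι : Type*} {s : Finset ι} {f : ι → SFd d}
    (hf : ∀ j ∈ s, DifferentiableAt ℝ (f j) x) (k : Fin d) :
    pdd (fun y => ∑ j ∈ s, f j y) k x = ∑ j ∈ s, pdd (f j) k x := by
  simp [pdd, fderiv_fun_sum hf]

lemma ContDiffAt.differentiableAt_fderiv (hf : ContDiffAt ℝ 2 f x) :
    DifferentiableAt ℝ (fderiv ℝ f) x :=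
  (hf.fderiv_right (m := 1) (by norm_num)).differentiableAt one_ne_zero

lemma ContDiffAt.differentiableAt_pdd (hf : ContDiffAt ℝ 2 f x) (k : Fin d) :
    DifferentiableAt ℝ (pdd f k) x :=
  hf.differentiableAt_fderiv.clm_apply (differentiableAt_const _)

lemma pdd_pdd_eq_fderiv_fderiv (hf : DifferentiableAt ℝ (fderiv ℝ f) x) (k l : Fin d) :
    pdd (pdd f k) l x = fderiv ℝ (fderiv ℝ f) x (Pi.single l 1) (Pi.single k 1) := by
  change fderiv ℝ (fun y => fderiv ℝ f y (Pi.single k 1)) x (Pi.single l 1) = _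
  simp [fderiv_clm_apply hf (differentiableAt_const _)]

lemma pdd_pdd_comm (hf : ContDiffAt ℝ 2 f x) (k l : Fin d) :
    pdd (pdd f k) l x = pdd (pdd f l) k x := by
  rw [pdd_pdd_eq_fderiv_fderiv hf.differentiableAt_fderiv,
    pdd_pdd_eq_fderiv_fderiv hf.differentiableAt_fderiv,
    hf.isSymmSndFDerivAt (by simp)]

end PartialDerivatives

section SeibergWitten

variable {d : ℕ} (θ : Fin d → Fin d → ℝ) {x : Fin d → ℝ}

theorem hasDerivAt_Ahat_add_mul {A a : Fin d → SFd d} (hA : ∀ m, DifferentiableAt ℝ (A m) x)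
    (ha : ∀ m, DifferentiableAt ℝ (a m) x) (i : Fin d) :
    HasDerivAt (fun s : ℝ => Ahat θ (fun m y => A m y + s * a m y) i x)
      (a i x - (1 / 2) * ∑ k, ∑ l,
        (θ k l * a k x * (2 * pdd (A i) l x - pdd (A l) i x)
          + θ k l * A k x * (2 * pdd (a i) l x - pdd (a l) i x))) 0 := by
  have haffine : ∀ p q : ℝ, HasDerivAt (fun s : ℝ => p + s * q) q 0 := fun p q =>
    (hasDerivAt_mul_const q).const_add p
  simp only [Ahat, pdd_add_mul (hA _) (ha _)]
  refine ((haffine _ _).fun_sub ((HasDerivAt.fun_sum fun k _ => HasDerivAt.fun_sum fun l _ =>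
    ((haffine _ _).const_mul (θ k l)).mul
      (((haffine _ _).const_mul 2).fun_sub (haffine _ _))).const_mul (1 / 2))).congr_deriv ?_
  simp only [zero_mul, add_zero]

theorem pdd_lamhat {lam : SFd d} {A : Fin d → SFd d} (hlam : ContDiffAt ℝ 2 lam x)
    (hA : ∀ m, DifferentiableAt ℝ (A m) x) (i : Fin d) :
    pdd (lamhat θ lam A) i x = pdd lam i x + (1 / 2) * ∑ k, ∑ l,
      (θ k l * pdd (pdd lam k) i x * A l x + θ k l * pdd lam k x * pdd (A l) i x) := by
  have hterm : ∀ k l, DifferentiableAt ℝ (fun y => θ k l * pdd lam k y) x := fun k l =>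
    (hlam.differentiableAt_pdd k).const_mul _
  have hinner : ∀ k, DifferentiableAt ℝ (fun y => ∑ l, θ k l * pdd lam k y * A l y) x :=
    fun k => DifferentiableAt.fun_sum fun l _ => (hterm k l).fun_mul (hA l)
  unfold lamhat
  rw [pdd_add (hlam.differentiableAt (by norm_num))
      ((DifferentiableAt.fun_sum fun k _ => hinner k).const_mul _),
    pdd_const_mul (DifferentiableAt.fun_sum fun k _ => hinner k), pdd_sum fun k _ => hinner k]
  congr 2
  refine sum_congr rfl fun k _ => ?_
  rw [pdd_sum fun l _ => (hterm k l).fun_mul (hA l)]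
  refine sum_congr rfl fun l _ => ?_
  rw [pdd_mul (hterm k l) (hA l), pdd_const_mul (hlam.differentiableAt_pdd k)]

end SeibergWitten

theorem SW_first_order_U1_gauge_orbits
    (d : ℕ) (θ : Fin d → Fin d → ℝ) (hθ : ∀ k l, θ k l = -θ l k)
    (lam : SFd d) (A : Fin d → SFd d)
    (hlam : ContDiff ℝ (⊤ : ℕ∞) lam) (hA : ∀ i, ContDiff ℝ (⊤ : ℕ∞) (A i)) :
    ∀ (i : Fin d) (x : Fin d → ℝ),
      deriv (fun s : ℝ =>
          Ahat θ (fun m y => A m y + s * pdd lam m y) i x) 0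
        = pdd (lamhat θ lam A) i x
          - ∑ k, ∑ l, θ k l * pdd lam k x * pdd (A i) l x := by
  intro i x
  have hlam2 : ContDiffAt ℝ 2 lam x := hlam.contDiffAt.of_le (WithTop.coe_le_coe.mpr le_top)
  have hAx : ∀ m, DifferentiableAt ℝ (A m) x := fun m =>
    (hA m).contDiffAt.differentiableAt (by simp)
  rw [(hasDerivAt_Ahat_add_mul θ hAx hlam2.differentiableAt_pdd i).deriv,
    pdd_lamhat θ hlam2 hAx i]
  have hcontract :
      (∑ k, ∑ l, (θ k l * pdd lam k x * (2 * pdd (A i) l x - pdd (A l) i x)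
          + θ k l * A k x * (2 * pdd (pdd lam i) l x - pdd (pdd lam l) i x)))
        + ∑ k, ∑ l, (θ k l * pdd (pdd lam k) i x * A l x + θ k l * pdd lam k x * pdd (A l) i x)
      = 2 * ∑ k, ∑ l, θ k l * pdd lam k x * pdd (A i) l x := by
    calc _ = ∑ k, ∑ l, (2 * (θ k l * pdd lam k x * pdd (A i) l x)
              + θ k l * (A k x * pdd (pdd lam l) i x + A l x * pdd (pdd lam k) i x)) := by
          simp only [← sum_add_distrib]
          refine sum_congr rfl fun k _ => sum_congr rfl fun l _ => ?_
          rw [pdd_pdd_comm hlam2 i l]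
          ring
      _ = _ := by
          rw [← add_zero (2 * _), ← sum_sum_antisymm_mul_symm_eq_zero hθ
            (S := fun k l => A k x * pdd (pdd lam l) i x + A l x * pdd (pdd lam k) i x)
            fun k l => add_comm _ _]
          simp only [sum_add_distrib, mul_sum]
  linarith
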